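/- Every blocked chain of domino tiles consists of at least 10 tiles. -/

import Mathlib

/-!
Let `a` be the left end. Since the chain is blocked, all seven tiles containing `a` lie in it, so
`a` occurs eight times among the entries `a₁, b₁, …, aₙ, bₙ` (the double `[a,a]` twice). The left
end contributes one occurrence and each interior junction `bᵢ = aᵢ₊₁ = a` two, so the chain also
ends at `a` and passes through `a` three times in between. Cutting it there gives four closed
trails at `a`; each is the double or has at least three tiles, because `(a,x),(x,a)` would repeat
a tile, and the double occurs only once. Hence `n ≥ 1 + 3 · 3 = 10`.
-/

/-- A domino tile is an unordered pair of values in `{0,…,6}`. -/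
abbrev Tile := Sym2 (Fin 7)

/-- The pip sum of the tile `[a,b]` is `a + b`. -/
def pips (t : Tile) : ℕ :=
  Sym2.lift ⟨fun (a b : Fin 7) => (a : ℕ) + (b : ℕ), fun a b => Nat.add_comm a b⟩ t

/-- A chain of domino tiles: a nonempty finite sequence of oriented tiles
`(a₁,b₁),…,(aₙ,bₙ)` whose underlying unordered tiles are pairwise distinct and
which satisfies `bᵢ = aᵢ₊₁` for all `1 ≤ i < n`. -/
structure DChain where
  tiles : List (Fin 7 × Fin 7)
  ne : tiles ≠ []
  nodup : (tiles.map fun p => Sym2.mk p.1 p.2).Nodup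
  linked : tiles.Chain' fun p q => p.2 = q.1

/-- The left end `a₁` of a chain. -/
def DChain.left (C : DChain) : Fin 7 := (C.tiles.head C.ne).1

/-- The right end `bₙ` of a chain. -/
def DChain.right (C : DChain) : Fin 7 := (C.tiles.getLast C.ne).2

/-- The `2n` entries `a₁,b₁,a₂,b₂,…,aₙ,bₙ` of a chain. -/
def DChain.entries (C : DChain) : List (Fin 7) := C.tiles.flatMap fun p => [p.1, p.2]

/-- The underlying (unordered) tiles of a chain. -/
def DChain.tileList (C : DChain) : List Tile := C.tiles.map fun p => Sym2.mk p.1 p.2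

/-- The total pip sum of a chain. -/
def DChain.pipsSum (C : DChain) : ℕ := (C.tiles.map fun p => (p.1 : ℕ) + (p.2 : ℕ)).sum

/-- A chain is blocked if no domino tile outside the chain contains its left end,
and no domino tile outside the chain contains its right end. -/
def DChain.Blocked (C : DChain) : Prop :=
  ∀ t : Tile, t ∉ C.tileList → C.left ∉ t ∧ C.right ∉ t

variable {α : Type*}

structure IsTrail (L : List (α × α)) : Prop where
  linked : L.IsChain fun p q => p.2 = q.1
  nodup : (L.map fun p => s(p.1, p.2)).Nodup

theorem IsTrail.of_append {L₁ L₂ : List (α × α)} (h : IsTrail (L₁ ++ L₂)) :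
    IsTrail L₁ ∧ IsTrail L₂ := by
  obtain ⟨hc₁, hc₂, -⟩ := List.isChain_append.mp h.linked
  obtain ⟨hn₁, hn₂, -⟩ := List.nodup_append.mp (List.map_append ▸ h.nodup)
  exact ⟨⟨hc₁, hn₁⟩, ⟨hc₂, hn₂⟩⟩

theorem List.IsChain.map_fst_eq_cons {L : List (α × α)} (hL : L.IsChain fun p q => p.2 = q.1)
    (hne : L ≠ []) : L.map Prod.fst = (L.head hne).1 :: L.dropLast.map Prod.snd := by
  induction L with
  | nil => exact absurd rfl hne
  | cons p L ih =>
    rcases L with _ | ⟨q, L⟩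
    · rfl
    · obtain ⟨hpq, hL⟩ := List.isChain_cons_cons.mp hL
      simp [ih hL (List.cons_ne_nil _ _), hpq]

section Visits

variable [DecidableEq α]

def innerVisits (a : α) (L : List (α × α)) : ℕ := L.dropLast.countP (·.2 = a)

theorem innerVisits_append {a : α} {L₁ L₂ : List (α × α)} (h₁ : L₁ ≠ []) (h₂ : L₂ ≠ [])
    (ha : (L₁.getLast h₁).2 = a) :
    innerVisits a (L₁ ++ L₂) = innerVisits a L₁ + 1 + innerVisits a L₂ := by
  conv_lhs => rw [innerVisits, List.dropLast_append_of_ne_nil h₂, ← List.dropLast_append_getLast h₁]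
  simp only [List.append_assoc, List.cons_append, List.nil_append, List.countP_append, ha,
    decide_true, List.countP_cons_of_pos, innerVisits]
  omega

theorem exists_append_of_innerVisits_pos {a : α} {L : List (α × α)} (h : 0 < innerVisits a L) :
    ∃ L₁ L₂, ∃ h₁ : L₁ ≠ [], L₂ ≠ [] ∧ L = L₁ ++ L₂ ∧ (L₁.getLast h₁).2 = a := by
  obtain ⟨p, hp, hpa⟩ := List.countP_pos_iff.mp h
  obtain ⟨s, t, hst⟩ := List.mem_iff_append.mp hp
  have hne : L ≠ [] := by rintro rfl; simp at hst
  refine ⟨s ++ [p], t ++ [L.getLast hne], by simp, by simp, ?_, by simpa using hpa⟩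
  conv_lhs => rw [← List.dropLast_append_getLast hne]
  simp [hst]

theorem countP_snd_eq_innerVisits_add (a : α) {L : List (α × α)} (hne : L ≠ []) :
    L.countP (·.2 = a) = innerVisits a L + if (L.getLast hne).2 = a then 1 else 0 := by
  conv_lhs => rw [← List.dropLast_append_getLast hne]
  simp [innerVisits]

theorem List.IsChain.countP_fst_eq_add_innerVisits {L : List (α × α)}
    (hL : L.IsChain fun p q => p.2 = q.1) (hne : L ≠ []) (a : α) :
    L.countP (·.1 = a) = (if (L.head hne).1 = a then 1 else 0) + innerVisits a L := by
  have := congrArg (List.countP (· = a)) (hL.map_fst_eq_cons hne)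
  simp only [List.countP_map, List.countP_cons, Function.comp_def, decide_eq_true_eq] at this
  rw [this, innerVisits, add_comm]

theorem countP_fst_add_countP_snd_eq (a : α) (L : List (α × α)) :
    L.countP (·.1 = a) + L.countP (·.2 = a) =
      (L.map fun p => s(p.1, p.2)).countP (a ∈ ·) + L.count (a, a) := by
  induction L with
  | nil => rfl
  | cons p L ih =>
    obtain ⟨x, y⟩ := p
    have hxy : (if x = a then 1 else 0) + (if y = a then 1 else 0) =
        (if a ∈ s(x, y) then 1 else 0) + (if (x, y) = (a, a) then 1 else 0) := by
      by_cases hx : x = a <;> by_cases hy : y = a <;> simp [hx, hy, eq_comm (a := a)]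
    simp only [List.countP_cons, List.map_cons, List.count_cons, decide_eq_true_eq, beq_iff_eq]
    omega

theorem IsTrail.count_diag_eq_one {L : List (α × α)} (hL : IsTrail L) {a : α}
    (ha : s(a, a) ∈ L.map fun p => s(p.1, p.2)) : L.count (a, a) = 1 := by
  obtain ⟨⟨x, y⟩, hp, hxy⟩ := List.mem_map.mp ha
  obtain ⟨rfl, rfl⟩ : x = a ∧ y = a := by simpa using Sym2.eq_iff.mp hxy
  exact List.count_eq_one_of_mem (hL.nodup.of_map _) hp

theorem IsTrail.three_le_length_add_two_mul_count {L : List (α × α)} (hL : IsTrail L) {a : α}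
    (hne : L ≠ []) (hhead : (L.head hne).1 = a) (hlast : (L.getLast hne).2 = a) :
    3 ≤ L.length + 2 * L.count (a, a) := by
  rcases L with _ | ⟨p, _ | ⟨q, _ | ⟨r, L⟩⟩⟩
  · exact absurd rfl hne
  · obtain rfl : p = (a, a) := Prod.ext hhead hlast
    simp
  · have hpq : p.2 = q.1 := (List.isChain_cons_cons.mp hL.linked).1
    have hsame : s(p.1, p.2) = s(q.1, q.2) := by
      simp only [List.head_cons, List.getLast_cons_cons, List.getLast_singleton] at hhead hlast
      rw [hhead, hlast, hpq, Sym2.eq_swap]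
    have hnodup := hL.nodup
    simp [hsame] at hnodup
  · simp only [List.length_cons]
    omega

theorem IsTrail.three_mul_innerVisits_add_three_le {L : List (α × α)} (hL : IsTrail L) {a : α}
    (hne : L ≠ []) (hhead : (L.head hne).1 = a) (hlast : (L.getLast hne).2 = a) :
    3 * innerVisits a L + 3 ≤ L.length + 2 * L.count (a, a) := by
  induction hn : L.length using Nat.strong_induction_on generalizing L with
  | _ n ih =>
    rcases Nat.eq_zero_or_pos (innerVisits a L) with h0 | hpos
    · simpa [h0, hn] using hL.three_le_length_add_two_mul_count hne hhead hlast
    obtain ⟨L₁, L₂, h₁, h₂, rfl, hmid⟩ := exists_append_of_innerVisits_pos hpos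
    obtain ⟨hL₁, hL₂⟩ := hL.of_append
    have hhead₂ : (L₂.head h₂).1 = a := by
      obtain ⟨-, -, hlink⟩ := List.isChain_append.mp hL.linked
      exact hmid ▸ (hlink _ (List.getLast?_eq_some_getLast h₁) _ (List.head?_eq_some_head h₂)).symm
    have ih₁ := ih L₁.length (by simp [← hn, List.length_pos_iff.mpr h₂]) hL₁ h₁
      (by simpa [List.head_append_of_ne_nil h₁] using hhead) hmid rfl
    have ih₂ := ih L₂.length (by simp [← hn, List.length_pos_iff.mpr h₁]) hL₂ h₂ hhead₂
      (by simpa [List.getLast_append_of_ne_nil _ h₂] using hlast) rfl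
    rw [← hn, innerVisits_append h₁ h₂ hmid, List.length_append, List.count_append]
    omega

end Visits

section Fintype

variable [Fintype α] [DecidableEq α]

theorem Sym2.card_filter_mem (a : α) :
    (Finset.univ.filter fun t : Sym2 α => a ∈ t).card = Fintype.card α := by
  have : (Finset.univ.filter fun t : Sym2 α => a ∈ t) = Finset.univ.map (Sym2.mkEmbedding a) := by
    ext t
    simp [Sym2.mem_iff_exists, eq_comm]
  rw [this, Finset.card_map, Finset.card_univ]

theorem List.Nodup.countP_mem_eq_card {l : List (Sym2 α)} (hl : l.Nodup) {a : α}
    (hall : ∀ t : Sym2 α, a ∈ t → t ∈ l) : l.countP (a ∈ ·) = Fintype.card α := by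
  rw [List.countP_eq_length_filter, ← List.toFinset_card_of_nodup (hl.filter _),
    ← Sym2.card_filter_mem a, List.toFinset_filter]
  congr 1
  ext t
  simpa using hall t

end Fintype

theorem blocked_length_ge_ten (C : DChain) (h : C.Blocked) : 10 ≤ C.tiles.length := by
  set a := C.left
  have hL : IsTrail C.tiles := ⟨C.linked, C.nodup⟩
  have hall (t : Tile) (ht : a ∈ t) : t ∈ C.tileList := by_contra fun hn => (h t hn).1 ht
  have hdeg : C.tileList.countP (a ∈ ·) = 7 := C.nodup.countP_mem_eq_card hall
  have hdouble : C.tiles.count (a, a) = 1 := hL.count_diag_eq_one (hall _ (Sym2.mem_mk_left a a))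
  have hhead : (C.tiles.head C.ne).1 = a := rfl
  have hentries : _ = C.tileList.countP (a ∈ ·) + _ := countP_fst_add_countP_snd_eq a C.tiles
  rw [hL.linked.countP_fst_eq_add_innerVisits C.ne, countP_snd_eq_innerVisits_add a C.ne,
    if_pos hhead] at hentries
  obtain ⟨hlast, hvisits⟩ : (C.tiles.getLast C.ne).2 = a ∧ innerVisits a C.tiles = 3 := by
    rw [hdeg, hdouble] at hentries
    split_ifs at hentries with hlast <;> omega
  have := hL.three_mul_innerVisits_add_three_le C.ne hhead hlast
  omega
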